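/- arXiv:2002.03132 — 9 statements merged into one kernel-verified Lean document; each statement's English description precedes it below -/
import Mathlib

section
/- Let f : x ⟶ w, g : w ⟶ x and f' : y ⟶ x, g' : x ⟶ y be 1-cells in a bicategory equipped with adjunctions (f ⊣ g, v, n) and (f' ⊣ g', v', n'), and consider the composite adjunction f' ≫ f ⊣ g ≫ g'. (a) If the unit n of f ⊣ g is invertible, then the unit of the composite adjunction is invertible if and only if the unit n' of f' ⊣ g' is invertible. (b) If the counit v' of f' ⊣ g' is invertible, then the counit of the composite adjunction is invertible if and only if the counit v of f ⊣ g is invertible. -/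
open CategoryTheory

namespace CategoryTheory.Bicategory.Adjunction

variable {B : Type*} [Bicategory B] {a b c : B} {f₁ : a ⟶ b} {g₁ : b ⟶ a} {f₂ : b ⟶ c} {g₂ : c ⟶ b}

theorem isIso_comp_unit_iff (adj₁ : f₁ ⊣ g₁) (adj₂ : f₂ ⊣ g₂) [IsIso adj₂.unit] :
    IsIso (adj₁.comp adj₂).unit ↔ IsIso adj₁.unit := by
  dsimp only [comp, compUnit, bicategoricalComp]
  exact isIso_comp_right_iff _ _

theorem isIso_comp_counit_iff (adj₁ : f₁ ⊣ g₁) (adj₂ : f₂ ⊣ g₂) [IsIso adj₁.counit] :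
    IsIso (adj₁.comp adj₂).counit ↔ IsIso adj₂.counit := by
  dsimp only [comp, compCounit, bicategoricalComp]
  simp only [← Category.assoc]
  exact isIso_comp_left_iff _ _

end CategoryTheory.Bicategory.Adjunction

/-- composition of adjunctions in a bicategory.
(a) If the unit of `f ⊣ g` is invertible, the unit of the composite adjunction
`f' ≫ f ⊣ g ≫ g'` is invertible iff the unit of `f' ⊣ g'` is.
(b) If the counit of `f' ⊣ g'` is invertible, the counit of the composite adjunction
is invertible iff the counit of `f ⊣ g` is. -/
theorem stmt0 {B : Type*} [Bicategory B] {x w y : B}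
    {f : x ⟶ w} {g : w ⟶ x} {f' : y ⟶ x} {g' : x ⟶ y}
    (adj : Bicategory.Adjunction f g) (adj' : Bicategory.Adjunction f' g') :
    (IsIso adj.unit → (IsIso (adj'.comp adj).unit ↔ IsIso adj'.unit)) ∧
    (IsIso adj'.counit → (IsIso (adj'.comp adj).counit ↔ IsIso adj.counit)) :=
  ⟨fun _ ↦ adj'.isIso_comp_unit_iff adj, fun _ ↦ adj'.isIso_comp_counit_iff adj⟩
end

section
/- Let f : x ⟶ w and f' : y ⟶ x be 1-cells of a bicategory. (a) If f is a lari, then the composite f' ≫ f is a lari if and only if f' is a lari. (b) If f is a rari, then the composite f' ≫ f is a rari if and only if f' is a rari. -/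
/-!
If `f ⊣ g` has invertible unit and `f' ≫ f ⊣ h`, then `f' ⊣ f ≫ h`: the unit is that of
`f' ≫ f ⊣ h`, and the counit is `f ≫ h ≫ f' ≅ f ≫ (h ≫ f' ≫ f) ≫ g ⟶ f ≫ g ≅ 𝟙`, using the
counit of `f' ≫ f ⊣ h` in the middle and the inverse of the unit of `f ⊣ g` at both ends. So
`f'` is a lari with the same unit as `f' ≫ f`. Conversely, composing adjunctions composes units,
so composites of laris are laris. The rari case is the 2-cell dual.
-/

open CategoryTheory

/-- A 1-cell `f` in a bicategory is a *lari* (left adjoint and left inverse up to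
invertible 2-cell) if it has a right adjoint with invertible unit. -/
def IsLari {B : Type*} [Bicategory B] {a b : B} (f : a ⟶ b) : Prop :=
  ∃ (g : b ⟶ a) (adj : Bicategory.Adjunction f g), IsIso adj.unit

/-- A 1-cell `f` in a bicategory is a *rari* (right adjoint and right inverse up to
invertible 2-cell) if it has a left adjoint with invertible counit. -/
def IsRari {B : Type*} [Bicategory B] {a b : B} (f : a ⟶ b) : Prop :=
  ∃ (e : b ⟶ a) (adj : Bicategory.Adjunction e f), IsIso adj.counit

namespace CategoryTheory.Bicategory.Adjunction

variable {B : Type*} [Bicategory B] {x w y : B}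

theorem inv_unit_whiskerRight {f : x ⟶ w} {g : w ⟶ x} (adj : f ⊣ g) [IsIso adj.unit] :
    inv adj.unit ▷ f = 𝟙 _ ⊗≫ f ◁ adj.counit ⊗≫ 𝟙 _ := by
  rw [← cancel_epi (adj.unit ▷ f), ← comp_whiskerRight, IsIso.hom_inv_id, id_whiskerRight]
  calc
    _ = 𝟙 _ ⊗≫ leftZigzag adj.unit adj.counit ⊗≫ 𝟙 _ := by
      rw [adj.left_triangle]; bicategory
    _ = _ := by bicategory

theorem inv_counit_whiskerRight {e : w ⟶ x} {f : x ⟶ w} (adj : e ⊣ f) [IsIso adj.counit] :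
    inv adj.counit ▷ f = 𝟙 _ ⊗≫ f ◁ adj.unit ⊗≫ 𝟙 _ := by
  rw [← cancel_mono (adj.counit ▷ f), ← comp_whiskerRight, IsIso.inv_hom_id, id_whiskerRight]
  calc
    _ = 𝟙 _ ⊗≫ rightZigzag adj.unit adj.counit ⊗≫ 𝟙 _ := by
      rw [adj.right_triangle]; bicategory
    _ = _ := by bicategory

noncomputable def ofCompOfIsIsoUnit {f : x ⟶ w} {g : w ⟶ x} {f' : y ⟶ x} {h : w ⟶ y}
    (adj : f ⊣ g) (adj' : f' ≫ f ⊣ h) [IsIso adj.unit] : f' ⊣ f ≫ h where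
  unit := adj'.unit ⊗≫ 𝟙 _
  counit := 𝟙 _ ⊗≫ (f ≫ h ≫ f') ◁ adj.unit ⊗≫ f ◁ adj'.counit ▷ g ⊗≫ inv adj.unit
  left_triangle := by
    calc
      _ = 𝟙 _ ⊗≫ (adj'.unit ▷ (f' ≫ 𝟙 x) ≫ ((f' ≫ f) ≫ h) ◁ (f' ◁ adj.unit)) ⊗≫
            (f' ≫ f) ◁ adj'.counit ▷ g ⊗≫ f' ◁ inv adj.unit ⊗≫ 𝟙 _ := by
          bicategory
      _ = 𝟙 _ ⊗≫ f' ◁ adj.unit ⊗≫ leftZigzag adj'.unit adj'.counit ▷ g ⊗≫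
            f' ◁ inv adj.unit ⊗≫ 𝟙 _ := by
          rw [← whisker_exchange]; bicategory
      _ = 𝟙 _ ⊗≫ f' ◁ (adj.unit ≫ inv adj.unit) ⊗≫ 𝟙 _ := by
          rw [adj'.left_triangle]; bicategory
      _ = (λ_ f').hom ≫ (ρ_ f').inv := by
          rw [IsIso.hom_inv_id]; bicategory
  right_triangle := by
    calc
      _ = 𝟙 _ ⊗≫ (f ≫ h) ◁ adj'.unit ⊗≫ (f ≫ h ≫ f') ◁ adj.unit ▷ (f ≫ h) ⊗≫
            f ◁ adj'.counit ▷ (g ≫ f ≫ h) ⊗≫ (inv adj.unit ▷ f) ▷ h ⊗≫ 𝟙 _ := by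
          bicategory
      _ = 𝟙 _ ⊗≫ (f ≫ h) ◁ adj'.unit ⊗≫ (f ≫ h ≫ f') ◁ adj.unit ▷ (f ≫ h) ⊗≫
            f ◁ (adj'.counit ▷ (g ≫ f) ≫ 𝟙 w ◁ adj.counit) ▷ h ⊗≫ 𝟙 _ := by
          rw [inv_unit_whiskerRight]; bicategory
      _ = 𝟙 _ ⊗≫ (f ≫ h) ◁ adj'.unit ⊗≫
            (f ≫ h ≫ f') ◁ leftZigzag adj.unit adj.counit ▷ h ⊗≫
            f ◁ adj'.counit ▷ h ⊗≫ 𝟙 _ := by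
          rw [← whisker_exchange]; bicategory
      _ = 𝟙 _ ⊗≫ f ◁ rightZigzag adj'.unit adj'.counit ⊗≫ 𝟙 _ := by
          rw [adj.left_triangle]; bicategory
      _ = (ρ_ (f ≫ h)).hom ≫ (λ_ (f ≫ h)).inv := by
          rw [adj'.right_triangle]; bicategory

instance {f : x ⟶ w} {g : w ⟶ x} {f' : y ⟶ x} {h : w ⟶ y}
    (adj : f ⊣ g) (adj' : f' ≫ f ⊣ h) [IsIso adj.unit] [IsIso adj'.unit] :
    IsIso (ofCompOfIsIsoUnit adj adj').unit := by
  dsimp only [ofCompOfIsIsoUnit, bicategoricalComp]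
  infer_instance

noncomputable def ofCompOfIsIsoCounit {f : x ⟶ w} {e : w ⟶ x} {f' : y ⟶ x} {k : w ⟶ y}
    (adj : e ⊣ f) (adj' : k ⊣ f' ≫ f) [IsIso adj.counit] : f ≫ k ⊣ f' where
  unit := inv adj.counit ⊗≫ f ◁ adj'.unit ▷ e ⊗≫ (f ≫ k ≫ f') ◁ adj.counit ⊗≫ 𝟙 _
  counit := 𝟙 _ ⊗≫ adj'.counit
  left_triangle := by
    calc
      _ = 𝟙 _ ⊗≫ (inv adj.counit ▷ f) ▷ k ⊗≫ f ◁ adj'.unit ▷ (e ≫ f ≫ k) ⊗≫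
            (f ≫ k ≫ f') ◁ adj.counit ▷ (f ≫ k) ⊗≫ (f ≫ k) ◁ adj'.counit ⊗≫ 𝟙 _ := by
          bicategory
      _ = 𝟙 _ ⊗≫ f ◁ (𝟙 w ◁ adj.unit ≫ adj'.unit ▷ (e ≫ f)) ▷ k ⊗≫
            (f ≫ k ≫ f') ◁ adj.counit ▷ (f ≫ k) ⊗≫ (f ≫ k) ◁ adj'.counit ⊗≫ 𝟙 _ := by
          rw [inv_counit_whiskerRight]; bicategory
      _ = 𝟙 _ ⊗≫ f ◁ adj'.unit ▷ k ⊗≫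
            (f ≫ k ≫ f') ◁ rightZigzag adj.unit adj.counit ▷ k ⊗≫
            (f ≫ k) ◁ adj'.counit ⊗≫ 𝟙 _ := by
          rw [whisker_exchange]; bicategory
      _ = 𝟙 _ ⊗≫ f ◁ leftZigzag adj'.unit adj'.counit ⊗≫ 𝟙 _ := by
          rw [adj.right_triangle]; bicategory
      _ = (λ_ (f ≫ k)).hom ≫ (ρ_ (f ≫ k)).inv := by
          rw [adj'.left_triangle]; bicategory
  right_triangle := by
    calc
      _ = 𝟙 _ ⊗≫ f' ◁ inv adj.counit ⊗≫ f' ◁ f ◁ adj'.unit ▷ e ⊗≫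
            (((f' ≫ f) ≫ k) ◁ (f' ◁ adj.counit) ≫ adj'.counit ▷ (f' ≫ 𝟙 x)) ⊗≫ 𝟙 _ := by
          bicategory
      _ = 𝟙 _ ⊗≫ f' ◁ inv adj.counit ⊗≫ rightZigzag adj'.unit adj'.counit ▷ e ⊗≫
            f' ◁ adj.counit ⊗≫ 𝟙 _ := by
          rw [whisker_exchange]; bicategory
      _ = 𝟙 _ ⊗≫ f' ◁ (inv adj.counit ≫ adj.counit) ⊗≫ 𝟙 _ := by
          rw [adj'.right_triangle]; bicategory
      _ = (ρ_ f').hom ≫ (λ_ f').inv := by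
          rw [IsIso.inv_hom_id]; bicategory

instance {f : x ⟶ w} {e : w ⟶ x} {f' : y ⟶ x} {k : w ⟶ y}
    (adj : e ⊣ f) (adj' : k ⊣ f' ≫ f) [IsIso adj.counit] [IsIso adj'.counit] :
    IsIso (ofCompOfIsIsoCounit adj adj').counit := by
  dsimp only [ofCompOfIsIsoCounit, bicategoricalComp]
  infer_instance

instance {f₁ : x ⟶ w} {g₁ : w ⟶ x} {f₂ : w ⟶ y} {g₂ : y ⟶ w}
    (adj₁ : f₁ ⊣ g₁) (adj₂ : f₂ ⊣ g₂) [IsIso adj₁.unit] [IsIso adj₂.unit] :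
    IsIso (adj₁.comp adj₂).unit := by
  rw [comp_unit]
  dsimp only [compUnit, bicategoricalComp]
  infer_instance

instance {f₁ : x ⟶ w} {g₁ : w ⟶ x} {f₂ : w ⟶ y} {g₂ : y ⟶ w}
    (adj₁ : f₁ ⊣ g₁) (adj₂ : f₂ ⊣ g₂) [IsIso adj₁.counit] [IsIso adj₂.counit] :
    IsIso (adj₁.comp adj₂).counit := by
  rw [comp_counit]
  dsimp only [compCounit, bicategoricalComp]
  infer_instance

end CategoryTheory.Bicategory.Adjunction

section

variable {B : Type*} [Bicategory B] {x w y : B} {f : x ⟶ w} {f' : y ⟶ x}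

theorem IsLari.comp (hf' : IsLari f') (hf : IsLari f) : IsLari (f' ≫ f) :=
  let ⟨_, adj', _⟩ := hf'
  let ⟨_, adj, _⟩ := hf
  ⟨_, adj'.comp adj, inferInstance⟩

theorem IsLari.of_comp (hf'f : IsLari (f' ≫ f)) (hf : IsLari f) : IsLari f' :=
  let ⟨_, adj', _⟩ := hf'f
  let ⟨_, adj, _⟩ := hf
  ⟨_, adj.ofCompOfIsIsoUnit adj', inferInstance⟩

theorem IsRari.comp (hf' : IsRari f') (hf : IsRari f) : IsRari (f' ≫ f) :=
  let ⟨_, adj', _⟩ := hf'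
  let ⟨_, adj, _⟩ := hf
  ⟨_, adj.comp adj', inferInstance⟩

theorem IsRari.of_comp (hf'f : IsRari (f' ≫ f)) (hf : IsRari f) : IsRari f' :=
  let ⟨_, adj', _⟩ := hf'f
  let ⟨_, adj, _⟩ := hf
  ⟨_, adj.ofCompOfIsIsoCounit adj', inferInstance⟩

end

/-- left cancellation property: for 1-cells `f : x ⟶ w` and `f' : y ⟶ x`,
(a) if `f` is a lari then `f' ≫ f` is a lari iff `f'` is a lari;
(b) if `f` is a rari then `f' ≫ f` is a rari iff `f'` is a rari. -/
theorem stmt2 {B : Type*} [Bicategory B] {x w y : B} (f : x ⟶ w) (f' : y ⟶ x) :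
    (IsLari f → (IsLari (f' ≫ f) ↔ IsLari f')) ∧
    (IsRari f → (IsRari (f' ≫ f) ↔ IsRari f')) :=
  ⟨fun hf => ⟨fun h => h.of_comp hf, fun h => h.comp hf⟩,
    fun hf => ⟨fun h => h.of_comp hf, fun h => h.comp hf⟩⟩
end

section
/- Let 𝒯 = (T, μ, η) be a monad on a category 𝔹. The following statements are equivalent: (i) μ is an isomorphism (𝒯 is idempotent); (ii) Tη is an epimorphism (equivalently, ηT is an epimorphism) in the functor category; (iii) μ is a monomorphism in the functor category; (iv) Tη = ηT, i.e. for every object X of 𝔹 one has T.map (η.app X) = η.app (T.obj X). -/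
open CategoryTheory

/-- for a monad `𝒯 = (T, μ, η)` on a category `𝔹`, the following are
equivalent: (i) `μ` is an isomorphism; (ii) `Tη` is an epimorphism; (ii') `ηT` is an
epimorphism; (iii) `μ` is a monomorphism; (iv) `Tη = ηT` componentwise. -/
theorem stmt4 {𝔹 : Type*} [Category 𝔹] (T : Monad 𝔹) :
    List.TFAE [IsIso T.μ,
      Epi (Functor.whiskerRight T.η T.toFunctor),
      Epi (Functor.whiskerLeft T.toFunctor T.η),
      Mono T.μ,
      ∀ X : 𝔹, T.toFunctor.map (T.η.app X) = T.η.app (T.toFunctor.obj X)] := by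
  set Tη := Functor.whiskerRight T.η T.toFunctor with hTη
  set ηT := Functor.whiskerLeft T.toFunctor T.η with hηT
  have h1 : Tη ≫ T.μ = 𝟙 _ := by
    ext X
    show T.toFunctor.map (T.η.app X) ≫ T.μ.app X = 𝟙 _
    exact T.right_unit X
  have h2 : ηT ≫ T.μ = 𝟙 _ := by
    ext X
    show T.η.app (T.toFunctor.obj X) ≫ T.μ.app X = 𝟙 _
    exact T.left_unit X
  tfae_have 1 → 2 := by
    intro h
    have : Tη = inv T.μ := by
      apply IsIso.eq_inv_of_inv_hom_id h1
    rw [this]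
    infer_instance
  tfae_have 1 → 3 := by
    intro h
    have : ηT = inv T.μ := by
      apply IsIso.eq_inv_of_inv_hom_id h2
    rw [this]
    infer_instance
  tfae_have 2 → 1 := by
    intro h
    refine ⟨Tη, ?_, h1⟩
    rw [← cancel_epi Tη, ← Category.assoc, h1, Category.id_comp, Category.comp_id]
  tfae_have 3 → 1 := by
    intro h
    refine ⟨ηT, ?_, h2⟩
    rw [← cancel_epi ηT, ← Category.assoc, h2, Category.id_comp, Category.comp_id]
  tfae_have 1 → 4 := by
    intro h
    exact IsIso.mono_of_iso _
  tfae_have 4 → 5 := by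
    intro h X
    have : Tη = ηT := by
      rw [← cancel_mono T.μ, h1, h2]
      rfl
    exact congrArg (fun α => NatTrans.app α X) this
  tfae_have 5 → 1 := by
    intro h
    refine ⟨Tη, ?_, h1⟩
    ext X
    show T.μ.app X ≫ T.toFunctor.map (T.η.app X) = 𝟙 _
    have nat := T.η.naturality (T.μ.app X)
    simp only [Functor.id_map, Functor.comp_obj] at nat
    rw [h X, nat, ← h (T.toFunctor.obj X), ← T.toFunctor.map_comp,
      T.left_unit, T.toFunctor.map_id]
    rfl
  tfae_finish
end

section
/- Let 𝒯 = (T, μ, η) be a monad on a category 𝔹 whose multiplication μ is an isomorphism. Then a morphism a : T.obj X ⟶ X is a 𝒯-algebra structure on X if and only if η.app X ≫ a = 𝟙 X; that is, if η.app X ≫ a = 𝟙 X then the associativity condition T.map a ≫ a = μ.app X ≫ a holds automatically, so that (X, a) is a 𝒯-algebra. -/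
open CategoryTheory

namespace CategoryTheory.Monad

variable {C : Type*} [Category C] (T : Monad C) [IsIso T.μ]

instance isIso_unit_app_obj (X : C) : IsIso (T.η.app (T.obj X)) :=
  have : IsIso (T.η.app (T.obj X) ≫ T.μ.app X) := by rw [T.left_unit]; infer_instance
  IsIso.of_isIso_comp_right _ (T.μ.app X)

/-- Both sides agree after precomposing with the isomorphism `η_{TX}`, by naturality of `η`
on one side and the left unit law on the other. -/
theorem assoc_of_unit {X : C} {a : T.obj X ⟶ X} (unit : T.η.app X ≫ a = 𝟙 X) :
    T.map a ≫ a = T.μ.app X ≫ a := by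
  rw [← cancel_epi (T.η.app (T.obj X)), ← Category.assoc, ← T.η.naturality a,
    Functor.id_map, Category.assoc, unit, T.left_unit_assoc]
  exact Category.comp_id a

end CategoryTheory.Monad

/-- for a monad `𝒯 = (T, μ, η)` with invertible multiplication,
a morphism `a : T X ⟶ X` is a `𝒯`-algebra structure (i.e. satisfies the unit and
associativity laws) if and only if `η.app X ≫ a = 𝟙 X`. -/
theorem stmt5 {𝔹 : Type*} [Category 𝔹] (T : Monad 𝔹) [IsIso T.μ]
    (X : 𝔹) (a : T.toFunctor.obj X ⟶ X) :
    (T.η.app X ≫ a = 𝟙 X ∧ T.toFunctor.map a ≫ a = T.μ.app X ≫ a) ↔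
      T.η.app X ≫ a = 𝟙 X :=
  ⟨And.left, fun unit => ⟨unit, T.assoc_of_unit unit⟩⟩
end

section
/- Let 𝒯 = (T, μ, η) be a monad on a category 𝔹. Then μ is an isomorphism if and only if the forgetful functor from the Eilenberg–Moore category of 𝒯-algebras to 𝔹 (CategoryTheory.Monad.forget) is full (it is always faithful, so this is equivalent to it being fully faithful). -/
/-!
If `μ` is invertible then `Tη = ηT`, which forces every algebra structure map `a : TA ⟶ A` to be
inverse to `η_A`; conjugating by these isomorphisms, every morphism commutes with the structure
maps. Conversely, if the forgetful functor is full, `η_{TX}` lifts to an algebra morphism between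
the free algebras on `X` and `TX`, and its compatibility square says that `η_{TX}` is also a
right inverse of `μ_X`.
-/

open CategoryTheory

namespace CategoryTheory.Monad

variable {C : Type*} [Category C] (T : Monad C)

lemma Algebra.a_comp_η_app [IsIso T.μ] (A : T.Algebra) : A.a ≫ T.η.app A.A = 𝟙 _ := by
  rw [T.unit_naturality, ← T.map_unit_app, ← T.map_comp, A.unit]
  exact (T : C ⥤ C).map_id _

lemma forget_full_of_isIso_μ [IsIso T.μ] : T.forget.Full where
  map_surjective {A B} f := by
    change A.A ⟶ B.A at f
    refine ⟨⟨f, ?_⟩, rfl⟩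
    calc T.map f ≫ B.a = (A.a ≫ T.η.app A.A) ≫ T.map f ≫ B.a := by
          rw [Algebra.a_comp_η_app, Category.id_comp]
      _ = A.a ≫ (f ≫ T.η.app B.A) ≫ B.a := by
          simp only [Category.assoc, unit_naturality_assoc]
      _ = A.a ≫ f := by rw [Category.assoc, B.unit, Category.comp_id]

lemma μ_app_comp_η_app_of_forget_full [T.forget.Full] (X : C) :
    T.μ.app X ≫ T.η.app (T.obj X) = 𝟙 _ := by
  obtain ⟨g, hg⟩ := T.forget.map_surjective
    (X := T.free.obj X) (Y := T.free.obj (T.obj X)) (T.η.app (T.obj X))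
  have h := g.h
  change g.f = T.η.app (T.obj X) at hg
  rw [hg] at h
  exact h.symm.trans (T.right_unit (T.obj X))

lemma isIso_μ_of_forget_full [T.forget.Full] : IsIso T.μ :=
  have (X : C) : IsIso (T.μ.app X) :=
    ⟨T.η.app (T.obj X), T.μ_app_comp_η_app_of_forget_full X, T.left_unit X⟩
  NatIso.isIso_of_isIso_app T.μ

end CategoryTheory.Monad

/-- for a monad `𝒯 = (T, μ, η)` on a category `𝔹`, the multiplication
`μ` is an isomorphism if and only if the forgetful functor from the Eilenberg–Moore
category of `𝒯`-algebras to `𝔹` is full. -/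
theorem stmt7 {𝔹 : Type*} [Category 𝔹] (T : Monad 𝔹) :
    IsIso T.μ ↔ T.forget.Full :=
  ⟨fun _ => T.forget_full_of_isIso_μ, fun _ => T.isIso_μ_of_forget_full⟩
end

section
/- Let (F ⊣ G, ε, η) be an adjunction with F : 𝔹 ⥤ 𝔸 left adjoint to G : 𝔸 ⥤ 𝔹. The following statements are equivalent: (i) the induced monad is idempotent, i.e. the multiplication GεF (with components G.map (ε.app (F.obj X))) is an isomorphism; (ii) Fη is an epimorphism (equivalently, ηG is an epimorphism) in the relevant functor category; (iii) εF is a monomorphism (equivalently, Gε is a monomorphism) in the relevant functor category; (iv) the induced comonad on 𝔸 (with comultiplication FηG) is idempotent, i.e. FηG is an isomorphism. -/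
open CategoryTheory

section Stmt8Aux

variable {C : Type*} [Category C]

/-- If `f ≫ g = 𝟙` and `f` is epi, then `f` is iso. -/
lemma stmt8_isIso_of_epi {X Y : C} {f : X ⟶ Y} {g : Y ⟶ X} (h : f ≫ g = 𝟙 X) (hf : Epi f) :
    IsIso f := by
  have h' : g ≫ f = 𝟙 Y := by
    rw [← cancel_epi f, ← Category.assoc, h, Category.id_comp, Category.comp_id]
  exact ⟨g, h, h'⟩

/-- If `f ≫ g = 𝟙` and `g` is mono, then `g` is iso. -/
lemma stmt8_isIso_of_mono {X Y : C} {f : X ⟶ Y} {g : Y ⟶ X} (h : f ≫ g = 𝟙 X) (hg : Mono g) :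
    IsIso g := by
  have h' : g ≫ f = 𝟙 Y := by
    rw [← cancel_mono g, Category.assoc, h, Category.id_comp, Category.comp_id]
  exact ⟨f, h', h⟩

variable {𝔸 𝔹 : Type*} [Category 𝔸] [Category 𝔹] {F : 𝔹 ⥤ 𝔸} {G : 𝔸 ⥤ 𝔹}

/-- If the induced monad multiplication `GεF` is iso, then each `F.map (η.app X)` is iso. -/
lemma stmt8_isIso_Fη (adj : F ⊣ G) (h : IsIso adj.toMonad.μ) (X : 𝔹) :
    IsIso (F.map (adj.unit.app X)) := by
  have hμ : IsIso (G.map (adj.counit.app (F.obj X))) := by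
    have : IsIso (adj.toMonad.μ.app X) := inferInstance
    simpa [Adjunction.toMonad] using this
  -- `η_{GFX} = GF(η_X)` by cancelling the mono `G.map (ε_{FX})`
  have hη : adj.unit.app (G.obj (F.obj X)) = G.map (F.map (adj.unit.app X)) := by
    have := hμ.mono_of_iso
    rw [← cancel_mono (G.map (adj.counit.app (F.obj X)))]
    erw [adj.right_triangle_components, ← G.map_comp, adj.left_triangle_components]
    simp
  refine ⟨adj.counit.app (F.obj X), adj.left_triangle_components X, ?_⟩
  have hnat := adj.counit.naturality (F.map (adj.unit.app X))
  dsimp at hnat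
  rw [← hnat, ← hη, adj.left_triangle_components]
  rfl

/-- If the induced comonad comultiplication `FηG` is iso, then each `η.app (G.obj a)` is iso. -/
lemma stmt8_isIso_ηG (adj : F ⊣ G) (h : IsIso adj.toComonad.δ) (a : 𝔸) :
    IsIso (adj.unit.app (G.obj a)) := by
  have hδ : IsIso (F.map (adj.unit.app (G.obj a))) := by
    have : IsIso (adj.toComonad.δ.app a) := inferInstance
    simpa [Adjunction.toComonad] using this
  -- `ε_{FGa} = FG(ε_a)` by cancelling the epi `F.map (η_{Ga})`
  have hε : adj.counit.app (F.obj (G.obj a)) = F.map (G.map (adj.counit.app a)) := by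
    have := hδ.epi_of_iso
    rw [← cancel_epi (F.map (adj.unit.app (G.obj a)))]
    erw [adj.left_triangle_components, ← F.map_comp, adj.right_triangle_components]
    simp
  refine ⟨G.map (adj.counit.app a), adj.right_triangle_components a, ?_⟩
  have hnat := adj.unit.naturality (G.map (adj.counit.app a))
  dsimp at hnat
  rw [hnat, ← hε, adj.right_triangle_components]
  rfl

/-- The left triangle identity as an equation of natural transformations. -/
lemma stmt8_left_triangle (adj : F ⊣ G) :
    Functor.whiskerRight adj.unit F ≫ Functor.whiskerLeft F adj.counit = 𝟙 F := by
  ext X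
  simp

/-- The right triangle identity as an equation of natural transformations. -/
lemma stmt8_right_triangle (adj : F ⊣ G) :
    Functor.whiskerLeft G adj.unit ≫ Functor.whiskerRight adj.counit G = 𝟙 G := by
  ext a
  simp

end Stmt8Aux

/-- for an adjunction `(F ⊣ G, ε, η)` with `F : 𝔹 ⥤ 𝔸`, the following
are equivalent: (i) the induced monad is idempotent (`GεF` is an isomorphism);
(ii) `Fη` is an epimorphism; (ii') `ηG` is an epimorphism; (iii) `εF` is a
monomorphism; (iii') `Gε` is a monomorphism; (iv) the induced comonad is idempotent
(`FηG` is an isomorphism). -/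
theorem stmt8 {𝔸 𝔹 : Type*} [Category 𝔸] [Category 𝔹] {F : 𝔹 ⥤ 𝔸} {G : 𝔸 ⥤ 𝔹}
    (adj : F ⊣ G) :
    List.TFAE [IsIso adj.toMonad.μ,
      Epi (Functor.whiskerRight adj.unit F),
      Epi (Functor.whiskerLeft G adj.unit),
      Mono (Functor.whiskerLeft F adj.counit),
      Mono (Functor.whiskerRight adj.counit G),
      IsIso adj.toComonad.δ] := by
  tfae_have 1 → 2 := by
    intro h
    haveI : ∀ X, IsIso ((Functor.whiskerRight adj.unit F).app X) := fun X => stmt8_isIso_Fη adj h X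
    haveI : IsIso (Functor.whiskerRight adj.unit F) := NatIso.isIso_of_isIso_app _
    exact IsIso.epi_of_iso _
  tfae_have 1 → 6 := by
    intro h
    haveI : ∀ a, IsIso (adj.toComonad.δ.app a) := by
      intro a
      have := stmt8_isIso_Fη adj h (G.obj a)
      simpa [Adjunction.toComonad] using this
    exact NatIso.isIso_of_isIso_app _
  tfae_have 2 → 4 := by
    intro h
    haveI h1 : IsIso (Functor.whiskerRight adj.unit F) := stmt8_isIso_of_epi (stmt8_left_triangle adj) h
    haveI : IsIso (Functor.whiskerLeft F adj.counit) := by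
      refine ⟨Functor.whiskerRight adj.unit F, ?_, stmt8_left_triangle adj⟩
      rw [← cancel_epi (Functor.whiskerRight adj.unit F), ← Category.assoc, stmt8_left_triangle adj]
      ext X
      simp
    exact IsIso.mono_of_iso _
  tfae_have 4 → 1 := by
    intro h
    haveI hiso : IsIso (Functor.whiskerLeft F adj.counit) :=
      stmt8_isIso_of_mono (stmt8_left_triangle adj) h
    haveI : ∀ X, IsIso (adj.toMonad.μ.app X) := by
      intro X
      haveI : IsIso ((Functor.whiskerLeft F adj.counit).app X) := inferInstance
      dsimp at this
      simpa [Adjunction.toMonad] using inferInstanceAs (IsIso (G.map (adj.counit.app (F.obj X))))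
    exact NatIso.isIso_of_isIso_app _
  tfae_have 6 → 3 := by
    intro h
    haveI : ∀ a, IsIso ((Functor.whiskerLeft G adj.unit).app a) := fun a => stmt8_isIso_ηG adj h a
    haveI : IsIso (Functor.whiskerLeft G adj.unit) := NatIso.isIso_of_isIso_app _
    exact IsIso.epi_of_iso _
  tfae_have 3 → 5 := by
    intro h
    haveI h' : IsIso (Functor.whiskerLeft G adj.unit) := stmt8_isIso_of_epi (stmt8_right_triangle adj) h
    haveI : IsIso (Functor.whiskerRight adj.counit G) := by
      refine ⟨Functor.whiskerLeft G adj.unit, ?_, stmt8_right_triangle adj⟩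
      rw [← cancel_epi (Functor.whiskerLeft G adj.unit), ← Category.assoc, stmt8_right_triangle adj]
      ext a
      simp
    exact IsIso.mono_of_iso _
  tfae_have 5 → 1 := by
    intro h
    haveI hiso : IsIso (Functor.whiskerRight adj.counit G) :=
      stmt8_isIso_of_mono (stmt8_right_triangle adj) h
    haveI : ∀ X, IsIso (adj.toMonad.μ.app X) := by
      intro X
      haveI : IsIso ((Functor.whiskerRight adj.counit G).app (F.obj X)) := inferInstance
      dsimp at this
      simpa [Adjunction.toMonad] using this
    exact NatIso.isIso_of_isIso_app _
  tfae_finish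
end

section
/- Let (F ⊣ G, ε, η) be an idempotent adjunction (the multiplication GεF of the induced monad is an isomorphism) with F : 𝔹 ⥤ 𝔸 left adjoint to G : 𝔸 ⥤ 𝔹. Then the adjunction is monadic — i.e. the Eilenberg–Moore comparison functor Monad.comparison adj : 𝔸 ⥤ (adj.toMonad).Algebra is an equivalence — if and only if it is Kleisli, i.e. if and only if F is essentially surjective. -/
/-!
For an idempotent monad `T` every algebra structure `a : T A ⟶ A` is inverse to the unit
`η_A`, so an algebra is nothing but an object at which `η` is invertible, and every algebra is
isomorphic to the free algebra on its carrier. Dually, `ε_{F b}` is invertible with inverse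
`F η_b`. Hence the comparison functor is always essentially surjective, and:

* if it is an equivalence, it reflects isomorphisms; as it sends `ε_a` to `G ε_a = η_{G a}⁻¹`,
  every `ε_a` is invertible and `a ≅ F (G a)`;
* if `F` is essentially surjective, `ε` is invertible everywhere, so `G` is fully faithful and
  the comparison functor is full and faithful as well.
-/

open CategoryTheory

namespace CategoryTheory

namespace Monad

variable {C : Type*} [Category C] (T : Monad C) [IsIso T.μ]

instance isIso_unit_app_algebra (X : T.Algebra) : IsIso (T.η.app X.A) :=
  (T.isSplitMono_iff_isIso_unit X.A).mp ⟨⟨⟨X.a, X.unit⟩⟩⟩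

lemma Algebra.inv_unit_app (X : T.Algebra) : inv (T.η.app X.A) = X.a :=
  IsIso.inv_eq_of_hom_inv_id X.unit

end Monad

namespace Adjunction

variable {C D : Type*} [Category C] [Category D] {F : C ⥤ D} {G : D ⥤ C} (adj : F ⊣ G)
  [IsIso adj.toMonad.μ]

lemma isIso_map_counit_app (a : D) : IsIso (G.map (adj.counit.app a)) := by
  have : IsIso (adj.unit.app (G.obj a)) :=
    Monad.isIso_unit_app_algebra adj.toMonad ((Monad.comparison adj).obj a)
  rw [← IsIso.inv_eq_of_hom_inv_id (adj.right_triangle_components a)]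
  infer_instance

lemma isIso_counit_app_obj (b : C) : IsIso (adj.counit.app (F.obj b)) := by
  refine ⟨F.map (adj.unit.app b), ?_, adj.left_triangle_components b⟩
  apply (adj.homEquiv _ _).injective
  simp only [Functor.comp_obj, Functor.id_obj, homEquiv_unit, Functor.map_comp,
    right_triangle_components_assoc, Functor.map_id, Category.comp_id]
  exact adj.toMonad.map_unit_app b

lemma isIso_counit_of_essSurj [F.EssSurj] : IsIso adj.counit := by
  have (a : D) : IsIso (adj.counit.app a) :=
    (NatTrans.isIso_app_iff_of_iso adj.counit (F.objObjPreimageIso a)).mp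
      (adj.isIso_counit_app_obj _)
  exact NatIso.isIso_of_isIso_app _

lemma isIso_counit_app_of_reflectsIsomorphisms [(Monad.comparison adj).ReflectsIsomorphisms]
    (a : D) : IsIso (adj.counit.app a) := by
  have : IsIso (adj.toMonad.forget.map ((Monad.comparison adj).map (adj.counit.app a))) :=
    adj.isIso_map_counit_app a
  have : IsIso ((Monad.comparison adj).map (adj.counit.app a)) :=
    isIso_of_reflects_iso _ adj.toMonad.forget
  exact isIso_of_reflects_iso _ (Monad.comparison adj)

instance comparison_essSurj_of_isIso_mu : (Monad.comparison adj).EssSurj where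
  mem_essImage X := by
    refine ⟨F.obj X.A, ⟨(Monad.Algebra.isoMk
      (@asIso _ _ _ _ (adj.toMonad.η.app X.A) (Monad.isIso_unit_app_algebra _ X)) ?_).symm⟩⟩
    change adj.toMonad.map (adj.toMonad.η.app X.A) ≫ adj.toMonad.μ.app X.A =
      X.a ≫ adj.toMonad.η.app X.A
    rw [Monad.right_unit, ← Monad.Algebra.inv_unit_app, IsIso.inv_hom_id]
    rfl

lemma essSurj_of_isEquivalence_comparison [(Monad.comparison adj).IsEquivalence] : F.EssSurj where
  mem_essImage a := ⟨G.obj a, ⟨@asIso _ _ _ _ (adj.counit.app a)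
    (adj.isIso_counit_app_of_reflectsIsomorphisms a)⟩⟩

lemma isEquivalence_comparison_of_essSurj [F.EssSurj] : (Monad.comparison adj).IsEquivalence :=
  have := adj.isIso_counit_of_essSurj
  have hG := adj.fullyFaithfulROfIsIsoCounit
  have := hG.faithful
  have := hG.full
  { full := Reflective.comparison_full adj }

end Adjunction

end CategoryTheory

/-- an idempotent adjunction `(F ⊣ G, ε, η)` is monadic (the
Eilenberg–Moore comparison functor is an equivalence) if and only if it is Kleisli,
i.e. if and only if the left adjoint `F` is essentially surjective. -/
theorem stmt10 {𝔸 𝔹 : Type*} [Category 𝔸] [Category 𝔹] {F : 𝔹 ⥤ 𝔸} {G : 𝔸 ⥤ 𝔹}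
    (adj : F ⊣ G) [IsIso adj.toMonad.μ] :
    (Monad.comparison adj).IsEquivalence ↔ F.EssSurj :=
  ⟨fun _ => adj.essSurj_of_isEquivalence_comparison,
    fun _ => adj.isEquivalence_comparison_of_essSurj⟩
end

section
/- Let (F ⊣ G, ε, η) with F : 𝔹 ⥤ 𝔸, G : 𝔸 ⥤ 𝔹 and (H ⊣ J, δ, ρ) with H : ℂ ⥤ 𝔹, J : 𝔹 ⥤ ℂ be adjunctions, and assume F ⊣ G is idempotent (GεF is an isomorphism). Then the following are equivalent for the composite adjunction (H ⋙ F) ⊣ (G ⋙ J) with unit α (components: ρ.app c followed by J.map (η.app (H.obj c))) and counit ε·(FδG) (components: F.map (δ.app (G.obj a)) followed by ε.app a): (i) the composite adjunction is idempotent; (ii) the natural transformation JGFδG, with components J.map (G.map (F.map (δ.app (G.obj a)))), is a monomorphism (equivalently, FδGFH, with components F.map (δ.app (G.obj (F.obj (H.obj c)))), is a monomorphism); (iii) the natural transformation FHα, with components F.map (H.map (α.app c)), is an epimorphism (equivalently, αJG, with components α.app (J.obj (G.obj a)), is an epimorphism). -/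
open CategoryTheory

/-- For a monad with invertible multiplication, `Tη = ηT`. -/
lemma stmt11_monad_eta_comm {C : Type*} [Category C] (T : Monad C) (h : IsIso T.μ) (X : C) :
    T.map (T.η.app X) = T.η.app (T.obj X) := by
  haveI := h
  rw [← cancel_mono (T.μ.app X), T.right_unit, T.left_unit]; rfl

/-- given adjunctions `(F ⊣ G, ε, η)` and `(H ⊣ J, δ, ρ)` with
`F ⊣ G` idempotent, the following are equivalent for the composite adjunction
`(H ⋙ F) ⊣ (G ⋙ J)` with unit `α`: (i) the composite adjunction is idempotent;
(ii) `JGFδG` is a monomorphism; (ii') `FδGFH` is a monomorphism;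
(iii) `FHα` is an epimorphism; (iii') `αJG` is an epimorphism. -/
theorem stmt11 {𝔸 𝔹 𝒞 : Type*} [Category 𝔸] [Category 𝔹] [Category 𝒞]
    {F : 𝔹 ⥤ 𝔸} {G : 𝔸 ⥤ 𝔹} {H : 𝒞 ⥤ 𝔹} {J : 𝔹 ⥤ 𝒞}
    (adj1 : F ⊣ G) (adj2 : H ⊣ J) (hidem : IsIso adj1.toMonad.μ) :
    List.TFAE [IsIso (adj2.comp adj1).toMonad.μ,
      Mono (Functor.whiskerRight (Functor.whiskerRight (Functor.whiskerLeft G adj2.counit) F) (G ⋙ J)),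
      Mono (Functor.whiskerLeft (H ⋙ F) (Functor.whiskerRight (Functor.whiskerLeft G adj2.counit) F)),
      Epi (Functor.whiskerRight (adj2.comp adj1).unit (H ⋙ F)),
      Epi (Functor.whiskerLeft (G ⋙ J) (adj2.comp adj1).unit)] := by
  set adj' := adj2.comp adj1 with hadj'
  set P := Functor.whiskerRight adj'.unit (H ⋙ F) with hP
  set B := Functor.whiskerLeft (H ⋙ F) (Functor.whiskerRight (Functor.whiskerLeft G adj2.counit) F) with hB
  set A := Functor.whiskerRight (Functor.whiskerRight (Functor.whiskerLeft G adj2.counit) F) (G ⋙ J) with hA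
  set Q := Functor.whiskerLeft (G ⋙ J) adj'.unit with hQ
  -- consequences of idempotency of `adj1`
  have hcomm : ∀ b : 𝔹, G.map (F.map (adj1.unit.app b)) = adj1.unit.app (G.obj (F.obj b)) :=
    stmt11_monad_eta_comm adj1.toMonad hidem
  have hηG : ∀ a : 𝔸, IsIso (adj1.unit.app (G.obj a)) := by
    intro a
    refine ⟨G.map (adj1.counit.app a), adj1.right_triangle_components a, ?_⟩
    have h1 := adj1.unit.naturality (G.map (adj1.counit.app a))
    simp only [Functor.id_map, Functor.comp_map, Functor.id_obj, Functor.comp_obj] at h1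
    rw [h1, ← hcomm, ← G.map_comp, ← F.map_comp, adj1.right_triangle_components]
    simp
  have hFη : ∀ b : 𝔹, IsIso (F.map (adj1.unit.app b)) := by
    intro b
    refine ⟨adj1.counit.app (F.obj b), adj1.left_triangle_components b, ?_⟩
    have h1 := adj1.counit.naturality (F.map (adj1.unit.app b))
    simp only [Functor.id_map, Functor.comp_map, Functor.id_obj, Functor.comp_obj] at h1
    rw [← h1, hcomm, adj1.left_triangle_components]; rfl
  have hεF : ∀ b : 𝔹, IsIso (adj1.counit.app (F.obj b)) := by
    intro b
    haveI := hFη b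
    haveI : IsIso (F.map (adj1.unit.app b) ≫ adj1.counit.app (F.obj b)) := by
      rw [show F.map (adj1.unit.app b) ≫ adj1.counit.app (F.obj b) = 𝟙 _ from
        adj1.left_triangle_components b]; exact IsIso.id _
    exact IsIso.of_isIso_comp_left (F.map (adj1.unit.app b)) (adj1.counit.app (F.obj b))
  -- the two key composites
  have hPBapp : ∀ c : 𝒞, (P ≫ B).app c = F.map (adj1.unit.app (H.obj c)) := by
    intro c
    simp only [hP, hB, hadj', NatTrans.comp_app, Functor.whiskerRight_app, Functor.whiskerLeft_app,
      Adjunction.comp_unit_app, Functor.comp_map, Functor.comp_obj, Functor.id_obj]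
    rw [← F.map_comp]
    congr 1
    rw [H.map_comp, Category.assoc, adj2.counit_naturality, adj2.left_triangle_components_assoc]
  have hQAapp : ∀ a : 𝔸, (Q ≫ A).app a = J.map (adj1.unit.app (G.obj a)) := by
    intro a
    simp only [hQ, hA, hadj', NatTrans.comp_app, Functor.whiskerRight_app, Functor.whiskerLeft_app,
      Adjunction.comp_unit_app, Functor.comp_map, Functor.comp_obj, Functor.id_obj]
    rw [Category.assoc, ← J.map_comp, adj1.unit_naturality, J.map_comp,
      adj2.right_triangle_components_assoc]
  haveI hPBiso : IsIso (P ≫ B) := by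
    haveI : ∀ c : 𝒞, IsIso ((P ≫ B).app c) := fun c => by rw [hPBapp c]; exact hFη _
    exact NatIso.isIso_of_isIso_app _
  haveI hQAiso : IsIso (Q ≫ A) := by
    haveI : ∀ a : 𝔸, IsIso ((Q ≫ A).app a) := fun a => by
      rw [hQAapp a]; haveI := hηG a; infer_instance
    exact NatIso.isIso_of_isIso_app _
  -- split mono structures from the triangle identities of the composite adjunction
  haveI hPsplit : IsSplitMono P := by
    refine IsSplitMono.mk' ⟨Functor.whiskerLeft (H ⋙ F) adj'.counit, ?_⟩
    ext c
    simpa [hP] using adj'.left_triangle_components c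
  haveI hQsplit : IsSplitMono Q := by
    refine IsSplitMono.mk' ⟨Functor.whiskerRight adj'.counit (G ⋙ J), ?_⟩
    ext a
    simpa [hQ] using adj'.right_triangle_components a
  -- expression for the multiplication of the composite monad
  have hμ : ∀ c : 𝒞, adj'.toMonad.μ.app c =
      (G ⋙ J).map (B.app c) ≫ (G ⋙ J).map (adj1.counit.app (F.obj (H.obj c))) := by
    intro c
    show (G ⋙ J).map (adj'.counit.app ((H ⋙ F).obj c)) = _
    rw [hadj', Adjunction.comp_counit_app, Functor.map_comp]
    rfl
  tfae_have 1 → 4 := by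
    intro h1
    have hcomm' : ∀ c : 𝒞, J.map (G.map (F.map (H.map (adj'.unit.app c)))) =
        adj'.unit.app (J.obj (G.obj (F.obj (H.obj c)))) :=
      fun c => stmt11_monad_eta_comm adj'.toMonad h1 c
    have hlt : ∀ X : 𝒞, F.map (H.map (adj'.unit.app X)) ≫
        adj'.counit.app (F.obj (H.obj X)) = 𝟙 (F.obj (H.obj X)) :=
      fun X => adj'.left_triangle_components X
    haveI : ∀ c : 𝒞, IsIso (P.app c) := by
      intro c
      have e1 : P.app c = (H ⋙ F).map (adj'.unit.app c) := by simp [hP]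
      rw [e1]
      refine ⟨adj'.counit.app ((H ⋙ F).obj c), adj'.left_triangle_components c, ?_⟩
      have h2 := adj'.counit.naturality ((H ⋙ F).map (adj'.unit.app c))
      simp only [Functor.id_map, Functor.comp_map, Functor.id_obj, Functor.comp_obj] at h2
      show adj'.counit.app (F.obj (H.obj c)) ≫ F.map (H.map (adj'.unit.app c)) = 𝟙 _
      rw [← h2, hcomm' c]
      exact hlt _
    haveI : IsIso P := NatIso.isIso_of_isIso_app _
    infer_instance
  tfae_have 4 → 3 := by
    intro h4
    haveI := h4
    haveI : IsIso P := isIso_of_epi_of_isSplitMono P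
    haveI : IsIso B := IsIso.of_isIso_comp_left P B
    infer_instance
  tfae_have 3 → 1 := by
    intro h3
    haveI := h3
    haveI : IsSplitEpi B := IsSplitEpi.mk' ⟨inv (P ≫ B) ≫ P, by simp⟩
    haveI : IsIso B := isIso_of_mono_of_isSplitEpi B
    haveI : ∀ c : 𝒞, IsIso (adj'.toMonad.μ.app c) := by
      intro c
      rw [hμ c]
      haveI := hεF (H.obj c)
      exact IsIso.comp_isIso' (Functor.map_isIso _ _) (Functor.map_isIso _ _)
    exact NatIso.isIso_of_isIso_app _
  tfae_have 1 → 5 := by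
    intro h1
    have hcomm' : ∀ c : 𝒞, J.map (G.map (F.map (H.map (adj'.unit.app c)))) =
        adj'.unit.app (J.obj (G.obj (F.obj (H.obj c)))) :=
      fun c => stmt11_monad_eta_comm adj'.toMonad h1 c
    have hrt : ∀ a : 𝔸, adj'.unit.app (J.obj (G.obj a)) ≫
        J.map (G.map (adj'.counit.app a)) = 𝟙 (J.obj (G.obj a)) :=
      fun a => adj'.right_triangle_components a
    haveI : ∀ a : 𝔸, IsIso (Q.app a) := by
      intro a
      have e1 : Q.app a = adj'.unit.app ((G ⋙ J).obj a) := by simp [hQ]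
      rw [e1]
      refine ⟨(G ⋙ J).map (adj'.counit.app a), adj'.right_triangle_components a, ?_⟩
      have h2 := adj'.unit.naturality ((G ⋙ J).map (adj'.counit.app a))
      simp only [Functor.id_map, Functor.comp_map, Functor.id_obj, Functor.comp_obj] at h2
      show J.map (G.map (adj'.counit.app a)) ≫ adj'.unit.app (J.obj (G.obj a)) = 𝟙 _
      rw [h2, ← hcomm' (J.obj (G.obj a)), ← J.map_comp, ← G.map_comp, ← F.map_comp,
        ← H.map_comp, hrt a]
      simp
    haveI : IsIso Q := NatIso.isIso_of_isIso_app _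
    infer_instance
  tfae_have 5 → 2 := by
    intro h5
    haveI := h5
    haveI : IsIso Q := isIso_of_epi_of_isSplitMono Q
    haveI : IsIso A := IsIso.of_isIso_comp_left Q A
    infer_instance
  tfae_have 2 → 1 := by
    intro h2
    haveI := h2
    haveI : IsSplitEpi A := IsSplitEpi.mk' ⟨inv (Q ≫ A) ≫ Q, by simp⟩
    haveI : IsIso A := isIso_of_mono_of_isSplitEpi A
    haveI : ∀ c : 𝒞, IsIso (adj'.toMonad.μ.app c) := by
      intro c
      rw [hμ c]
      haveI := hεF (H.obj c)
      haveI : IsIso ((G ⋙ J).map (B.app c)) := by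
        have h : (G ⋙ J).map (B.app c) = A.app (F.obj (H.obj c)) := rfl
        rw [h]; infer_instance
      exact IsIso.comp_isIso' this (Functor.map_isIso _ _)
    exact NatIso.isIso_of_isIso_app _
  tfae_finish
end

section
/- Let 𝔸 be a category with binary coproducts, let g : w ⟶ x be a split epimorphism and let f : x ⟶ y be a regular epimorphism. Then the composite g ≫ f : w ⟶ y is a regular epimorphism. -/
/-!
Let `s` be a section of `g` and let `f` be the coequalizer of `l, r : W ⟶ x`. Then `g ≫ f` is
the coequalizer of the two maps `W ⨿ w ⟶ w` given by `(l ≫ s, 𝟙)` and `(r ≫ s, g ≫ s)`: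
a map `k` out of `w` coequalizes them iff `k = g ≫ (s ≫ k)`, i.e. `k` factors through `g`,
and `s ≫ k` is coequalized by `l` and `r`, i.e. it factors through `f`.
-/

open CategoryTheory Limits

namespace CategoryTheory.RegularEpi

variable {C : Type*} [Category C] [HasBinaryCoproducts C] {w x y z : C}
  (g : w ⟶ x) [IsSplitEpi g] {f : x ⟶ y} (hf : RegularEpi f)

noncomputable abbrev splitEpiCompLeft : hf.W ⨿ w ⟶ w :=
  coprod.desc (hf.left ≫ section_ g) (𝟙 w)

noncomputable abbrev splitEpiCompRight : hf.W ⨿ w ⟶ w :=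
  coprod.desc (hf.right ≫ section_ g) (g ≫ section_ g)

lemma splitEpiComp_condition_iff (k : w ⟶ z) :
    splitEpiCompLeft g hf ≫ k = splitEpiCompRight g hf ≫ k ↔
      hf.left ≫ section_ g ≫ k = hf.right ≫ section_ g ≫ k ∧ k = g ≫ section_ g ≫ k := by
  simp only [coprod.hom_ext_iff, coprod.inl_desc_assoc, coprod.inr_desc_assoc, Category.assoc,
    Category.id_comp]

lemma splitEpiComp_w :
    splitEpiCompLeft g hf ≫ g ≫ f = splitEpiCompRight g hf ≫ g ≫ f :=
  (splitEpiComp_condition_iff g hf (g ≫ f)).2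
    ⟨by simp [hf.w], by simp⟩

noncomputable def splitEpiComp : RegularEpi (g ≫ f) where
  W := hf.W ⨿ w
  left := splitEpiCompLeft g hf
  right := splitEpiCompRight g hf
  w := splitEpiComp_w g hf
  isColimit := Cofork.IsColimit.mk' _ fun c => by
    obtain ⟨hcoeq, hfactor⟩ := (splitEpiComp_condition_iff g hf c.π).1 c.condition
    obtain ⟨l, hl⟩ := hf.desc' (section_ g ≫ c.π) hcoeq
    have := hf.epi
    refine ⟨l, by simp [hl, ← hfactor], fun {m} hm => ?_⟩
    rw [← cancel_epi (g ≫ f)]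
    simpa [hl, ← hfactor] using hm

end CategoryTheory.RegularEpi

/-- in a category with binary coproducts, the composite of a split
epimorphism followed by a regular epimorphism is a regular epimorphism. -/
theorem stmt16 {𝔸 : Type*} [Category 𝔸] [Limits.HasBinaryCoproducts 𝔸]
    {w x y : 𝔸} (g : w ⟶ x) (f : x ⟶ y) [IsSplitEpi g] (hf : RegularEpi f) :
    Nonempty (RegularEpi (g ≫ f)) :=
  ⟨RegularEpi.splitEpiComp g hf⟩
end
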